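/- arXiv:2006.05852 — 2 statements merged into one kernel-verified Lean document; each statement's English description precedes it below -/
import Mathlib

section
/- Hermitian S-lemma (S-procedure with one constraint, complex case). Let n ≥ 1, let A and B be n×n complex Hermitian matrices, let b, d ∈ ℂⁿ, and let c, f ∈ ℝ. Define the real-valued quadratic functions g(x) = xᴴAx + 2·Re(bᴴx) + c and φ(x) = xᴴBx + 2·Re(dᴴx) + f for x ∈ ℂⁿ (the terms xᴴAx and xᴴBx are real because A and B are Hermitian). Assume there exists x₀ ∈ ℂⁿ with g(x₀) > 0 (Slater condition). Then the implication (for all x ∈ ℂⁿ, g(x) ≥ 0 implies φ(x) ≥ 0) holds if and only if there exists λ ≥ 0 such that the (n+1)×(n+1) Hermitian block matrix [[B − λA, d − λb], [(d − λb)ᴴ, f − λc]] is positive semidefinite. -/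
/-
Homogenization: `g x` and `φ x` are the Hermitian forms of `M = [[A, b], [bᴴ, c]]` and
`N = [[B, d], [dᴴ, f]]` at `(x, 1)`. Scaling gives `yᴴMy ≥ 0 → yᴴNy ≥ 0` for every `y` with
nonzero last coordinate, and perturbing along the Slater point gives it for all `y`. The
homogeneous S-lemma holds because the joint range `{(yᴴMy, yᴴNy)}` is closed under addition
(Hausdorff–Toeplitz convexity): `λ = inf {yᴴNy / yᴴMy | yᴴMy > 0}` then makes `N - λM ⪰ 0`, a
point with `yᴴMy < 0` being added to one with `yᴴMy > 0` so as to reach `yᴴMy = 0`.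
-/
open Matrix ComplexOrder

/-- The `(n+1) × (n+1)` Hermitian block matrix `[[A, v], [vᴴ, s]]` built from an
`n × n` block `A`, a column vector `v`, its conjugate-transposed row, and a real scalar `s`. -/
noncomputable def hermBlock {n : ℕ} (A : Matrix (Fin n) (Fin n) ℂ) (v : Fin n → ℂ) (s : ℝ) :
    Matrix (Fin n ⊕ Unit) (Fin n ⊕ Unit) ℂ :=
  Matrix.fromBlocks A (Matrix.of fun i (_ : Unit) => v i)
    (Matrix.of fun (_ : Unit) j => star (v j))
    (Matrix.of fun (_ : Unit) (_ : Unit) => (s : ℂ))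

open Filter Topology in
lemma nonneg_of_forall_pos_nonneg_quadratic {a b c : ℝ}
    (h : ∀ ε > 0, 0 ≤ a + b * ε + c * ε ^ 2) : 0 ≤ a := by
  have hlim : Tendsto (fun ε : ℝ => a + b * ε + c * ε ^ 2) (𝓝[>] 0) (𝓝 a) :=
    tendsto_nhdsWithin_of_tendsto_nhds <|
      (by fun_prop : Continuous fun ε : ℝ => a + b * ε + c * ε ^ 2).tendsto' 0 a (by simp)
  exact ge_of_tendsto hlim (eventually_nhdsWithin_of_forall h)

lemma exists_nonneg_eq_mul_add_two_mul {a b e₁ e₂ : ℝ} (hdet : e₁ * b = e₂ * a)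
    (hdot : 0 ≤ e₁ * a + e₂ * b) :
    ∃ s : ℝ, 0 ≤ s ∧ a = s * (a + 2 * e₁) ∧ b = s * (b + 2 * e₂) := by
  by_cases hab : a ^ 2 + b ^ 2 = 0
  · have ha : a = 0 := by nlinarith [sq_nonneg a, sq_nonneg b]
    have hb : b = 0 := by nlinarith [sq_nonneg a, sq_nonneg b]
    exact ⟨0, le_rfl, by simp [ha], by simp [hb]⟩
  have hD : 0 < a * (a + 2 * e₁) + b * (b + 2 * e₂) := by
    have : 0 < a ^ 2 + b ^ 2 := lt_of_le_of_ne (by positivity) (Ne.symm hab)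
    linarith
  refine ⟨(a ^ 2 + b ^ 2) / (a * (a + 2 * e₁) + b * (b + 2 * e₂)), by positivity, ?_, ?_⟩
  · rw [div_mul_eq_mul_div, eq_div_iff hD.ne']
    linear_combination (-2 * b) * hdet
  · rw [div_mul_eq_mul_div, eq_div_iff hD.ne']
    linear_combination (2 * a) * hdet

lemma Complex.exists_normSq_eq_one_re_mul_eq_zero (c : ℂ) :
    ∃ ζ : ℂ, Complex.normSq ζ = 1 ∧ (ζ * c).re = 0 := by
  refine ⟨Complex.I * Complex.exp (-(c.arg : ℂ) * Complex.I), ?_, ?_⟩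
  · rw [Complex.normSq_mul, Complex.normSq_I, ← Complex.ofReal_neg, Complex.normSq_eq_norm_sq,
      Complex.norm_exp_ofReal_mul_I]
    norm_num
  · have hc := Complex.norm_mul_exp_arg_mul_I c
    set θ := c.arg
    rw [← hc, show Complex.I * Complex.exp (-(θ : ℂ) * Complex.I) *
        ((‖c‖ : ℂ) * Complex.exp (θ * Complex.I)) = Complex.I * ‖c‖ by
      rw [mul_mul_mul_comm, ← Complex.exp_add, neg_mul, neg_add_cancel, Complex.exp_zero, mul_one]]
    simp

namespace Matrix

variable {ι : Type*} [Fintype ι]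

noncomputable def hermForm (H : Matrix ι ι ℂ) (y : ι → ℂ) : ℝ := (star y ⬝ᵥ H *ᵥ y).re

lemma posSemidef_iff_hermForm_nonneg {H : Matrix ι ι ℂ} :
    H.PosSemidef ↔ H.IsHermitian ∧ ∀ y, 0 ≤ hermForm H y := by
  rw [posSemidef_iff_dotProduct_mulVec]
  refine and_congr_right fun hH => forall_congr' fun y => ?_
  have him : (star y ⬝ᵥ H *ᵥ y).im = 0 := hH.im_star_dotProduct_mulVec_self y
  rw [Complex.nonneg_iff, him, hermForm]
  simp

lemma hermForm_smul (H : Matrix ι ι ℂ) (a : ℂ) (y : ι → ℂ) :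
    hermForm H (a • y) = Complex.normSq a * hermForm H y := by
  rw [hermForm, hermForm, star_smul, mulVec_smul, smul_dotProduct, dotProduct_smul, smul_eq_mul,
    smul_eq_mul, ← mul_assoc, Complex.star_def, ← Complex.normSq_eq_conj_mul_self,
    Complex.re_ofReal_mul]

lemma hermForm_ofReal_sqrt_smul (H : Matrix ι ι ℂ) {r : ℝ} (hr : 0 ≤ r) (y : ι → ℂ) :
    hermForm H ((√r : ℂ) • y) = r * hermForm H y := by
  rw [hermForm_smul, Complex.normSq_ofReal, Real.mul_self_sqrt hr]

lemma hermForm_sub (P Q : Matrix ι ι ℂ) (y : ι → ℂ) :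
    hermForm (P - Q) y = hermForm P y - hermForm Q y := by
  rw [hermForm, sub_mulVec, dotProduct_sub, Complex.sub_re, hermForm, hermForm]

lemma hermForm_real_smul (r : ℝ) (H : Matrix ι ι ℂ) (y : ι → ℂ) :
    hermForm (r • H) y = r * hermForm H y := by
  rw [hermForm, smul_mulVec, dotProduct_smul, Complex.real_smul, Complex.re_ofReal_mul, hermForm]

lemma IsHermitian.star_dotProduct_mulVec_comm {H : Matrix ι ι ℂ} (hH : H.IsHermitian)
    (x y : ι → ℂ) : star y ⬝ᵥ H *ᵥ x = star (star x ⬝ᵥ H *ᵥ y) := by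
  rw [dotProduct_mulVec]
  conv_lhs => rw [← hH]
  rw [← star_mulVec, star_dotProduct]

lemma IsHermitian.hermForm_add_smul {H : Matrix ι ι ℂ} (hH : H.IsHermitian) (a : ℂ)
    (x y : ι → ℂ) :
    hermForm H (x + a • y) =
      hermForm H x + Complex.normSq a * hermForm H y + 2 * (a * (star x ⬝ᵥ H *ᵥ y)).re := by
  have hcross := hH.star_dotProduct_mulVec_comm x (a • y)
  have him : (star y ⬝ᵥ H *ᵥ y).im = 0 := hH.im_star_dotProduct_mulVec_self y
  unfold hermForm
  rw [star_add, mulVec_add, add_dotProduct, dotProduct_add, dotProduct_add, hcross]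
  simp only [star_smul, mulVec_smul, smul_dotProduct, dotProduct_smul, smul_eq_mul,
    Complex.add_re, Complex.star_def, Complex.conj_re, Complex.mul_re, Complex.conj_im,
    Complex.mul_im, him, Complex.normSq_apply]
  ring

lemma IsHermitian.hermForm_add_ofReal_smul {H : Matrix ι ι ℂ} (hH : H.IsHermitian) (r : ℝ)
    (x y : ι → ℂ) :
    hermForm H (x + (r : ℂ) • y) =
      hermForm H x + r ^ 2 * hermForm H y + 2 * r * (star x ⬝ᵥ H *ᵥ y).re := by
  rw [hH.hermForm_add_smul, Complex.normSq_ofReal, Complex.re_ofReal_mul]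
  ring

lemma exists_hermForm_eq_add {M N : Matrix ι ι ℂ} (hM : M.IsHermitian) (hN : N.IsHermitian)
    (u v : ι → ℂ) :
    ∃ w, hermForm M w = hermForm M u + hermForm M v ∧
      hermForm N w = hermForm N u + hermForm N v := by
  set a := hermForm M u + hermForm M v
  set b := hermForm N u + hermForm N v
  set p := star u ⬝ᵥ M *ᵥ v
  set q := star u ⬝ᵥ N *ᵥ v
  -- `w` rescales `u + ζ • v`, for a phase `ζ` making `(Re (ζ p), Re (ζ q))` point along `(a, b)`
  obtain ⟨ζ, hζ, hdet, hdot⟩ : ∃ ζ : ℂ, Complex.normSq ζ = 1 ∧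
      (ζ * p).re * b = (ζ * q).re * a ∧ 0 ≤ (ζ * p).re * a + (ζ * q).re * b := by
    obtain ⟨ζ, hζ, hre⟩ := Complex.exists_normSq_eq_one_re_mul_eq_zero (p * b - q * a)
    have hdet : (ζ * p).re * b = (ζ * q).re * a := by
      have : (ζ * (p * b - q * a)).re = (ζ * p).re * b - (ζ * q).re * a := by
        simp only [mul_sub, ← mul_assoc, Complex.sub_re, Complex.re_mul_ofReal]
      linarith
    rcases le_total 0 ((ζ * p).re * a + (ζ * q).re * b) with h | h
    · exact ⟨ζ, hζ, hdet, h⟩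
    · refine ⟨-ζ, by rwa [Complex.normSq_neg], ?_, ?_⟩ <;>
        simp only [neg_mul, Complex.neg_re] <;> linarith
  obtain ⟨s, hs, ha, hb⟩ := exists_nonneg_eq_mul_add_two_mul hdet hdot
  refine ⟨(√s : ℂ) • (u + ζ • v), ?_, ?_⟩
  · rw [hermForm_ofReal_sqrt_smul _ hs, hM.hermForm_add_smul, hζ, ha]
    ring
  · rw [hermForm_ofReal_sqrt_smul _ hs, hN.hermForm_add_smul, hζ, hb]
    ring

theorem exists_smul_hermForm_le {M N : Matrix ι ι ℂ} (hM : M.IsHermitian) (hN : N.IsHermitian)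
    {y₀ : ι → ℂ} (h₀ : 0 < hermForm M y₀) (h : ∀ y, 0 ≤ hermForm M y → 0 ≤ hermForm N y) :
    ∃ lam : ℝ, 0 ≤ lam ∧ ∀ y, lam * hermForm M y ≤ hermForm N y := by
  set S := (fun z => hermForm N z / hermForm M z) '' {z | 0 < hermForm M z}
  have hS : ∀ r ∈ S, 0 ≤ r := by
    rintro _ ⟨z, hz, rfl⟩
    exact div_nonneg (h z hz.le) hz.le
  have hne : S.Nonempty := ⟨_, y₀, h₀, rfl⟩
  refine ⟨sInf S, le_csInf hne hS, fun y => ?_⟩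
  rcases lt_trichotomy (hermForm M y) 0 with hy | hy | hy
  · rw [← div_le_iff_of_neg hy]
    refine le_csInf hne ?_
    rintro _ ⟨z, hz, rfl⟩
    obtain ⟨w, hwM, hwN⟩ := exists_hermForm_eq_add hM hN
      ((√(hermForm M z) : ℂ) • y) ((√(-hermForm M y) : ℂ) • z)
    simp only [hermForm_ofReal_sqrt_smul _ hz.le, hermForm_ofReal_sqrt_smul _ (neg_nonneg.2 hy.le)]
      at hwM hwN
    have hw := h w (hwM.trans (by ring)).symm.le
    rw [hwN] at hw
    rw [le_div_iff₀ hz, div_mul_eq_mul_div, div_le_iff_of_neg hy]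
    linarith
  · rw [hy, mul_zero]
    exact h y hy.ge
  · rw [← le_div_iff₀ hy]
    exact csInf_le ⟨0, hS⟩ ⟨y, hy, rfl⟩

theorem hermForm_nonneg_of_forall_add_smul {M N : Matrix ι ι ℂ} (hM : M.IsHermitian)
    (hN : N.IsHermitian) {y₀ y : ι → ℂ} (h₀ : 0 < hermForm M y₀) (hy : 0 ≤ hermForm M y)
    (h : ∀ ε : ℝ, ε ≠ 0 → 0 ≤ hermForm M (y + (ε : ℂ) • y₀) →
      0 ≤ hermForm N (y + (ε : ℂ) • y₀)) :
    0 ≤ hermForm N y := by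
  set r := (star y ⬝ᵥ M *ᵥ y₀).re
  obtain ⟨σ, hσ, hσr⟩ : ∃ σ : ℝ, σ ^ 2 = 1 ∧ 0 ≤ σ * r := by
    rcases le_total 0 r with hr | hr
    · exact ⟨1, by norm_num, by linarith⟩
    · exact ⟨-1, by norm_num, by linarith⟩
  refine nonneg_of_forall_pos_nonneg_quadratic (b := 2 * σ * (star y ⬝ᵥ N *ᵥ y₀).re)
    (c := hermForm N y₀) fun ε hε => ?_
  have hσε : σ * ε ≠ 0 := mul_ne_zero (by rintro rfl; norm_num at hσ) hε.ne'
  have key := h (σ * ε) hσε (by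
    rw [hM.hermForm_add_ofReal_smul, mul_pow, hσ]
    nlinarith [mul_nonneg hε.le hσr, mul_nonneg (sq_nonneg ε) h₀.le])
  rw [hN.hermForm_add_ofReal_smul, mul_pow, hσ] at key
  linarith

theorem hermForm_nonneg_imp_of_forall_sumElim_one {M N : Matrix (ι ⊕ Unit) (ι ⊕ Unit) ℂ}
    (hM : M.IsHermitian) (hN : N.IsHermitian) {x₀ : ι → ℂ} (h₀ : 0 < hermForm M (Sum.elim x₀ 1))
    (h : ∀ x, 0 ≤ hermForm M (Sum.elim x 1) → 0 ≤ hermForm N (Sum.elim x 1)) (y : ι ⊕ Unit → ℂ)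
    (hy : 0 ≤ hermForm M y) : 0 ≤ hermForm N y := by
  have hlast_ne_zero :
      ∀ y : ι ⊕ Unit → ℂ, y (.inr ()) ≠ 0 → 0 ≤ hermForm M y → 0 ≤ hermForm N y := by
    intro y ht hy
    have hy_eq : y = y (.inr ()) • Sum.elim ((y (.inr ()))⁻¹ • (y ∘ Sum.inl)) 1 := by
      ext (i | ⟨⟩) <;> simp [ht]
    have hpos : 0 < Complex.normSq (y (.inr ())) := Complex.normSq_pos.2 ht
    rw [hy_eq, hermForm_smul] at hy ⊢
    exact mul_nonneg hpos.le (h _ (nonneg_of_mul_nonneg_right hy hpos))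
  by_cases ht : y (.inr ()) = 0
  · refine hermForm_nonneg_of_forall_add_smul hM hN h₀ hy fun ε hε => hlast_ne_zero _ ?_
    simpa [ht] using hε
  · exact hlast_ne_zero y ht hy

end Matrix

lemma hermBlock_isHermitian {n : ℕ} {A : Matrix (Fin n) (Fin n) ℂ} (hA : A.IsHermitian)
    (v : Fin n → ℂ) (s : ℝ) : (hermBlock A v s).IsHermitian := by
  ext (i | ⟨⟩) (j | ⟨⟩) <;>
    simp [hermBlock, Matrix.conjTranspose_apply, Matrix.fromBlocks, hA.apply]

lemma hermBlock_sub_smul {n : ℕ} (A B : Matrix (Fin n) (Fin n) ℂ) (b d : Fin n → ℂ)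
    (lam c f : ℝ) :
    hermBlock (B - lam • A) (d - lam • b) (f - lam * c) =
      hermBlock B d f - lam • hermBlock A b c := by
  ext (i | ⟨⟩) (j | ⟨⟩) <;>
    simp [hermBlock, Matrix.fromBlocks, Complex.real_smul]

lemma hermForm_hermBlock_sumElim_one {n : ℕ} (A : Matrix (Fin n) (Fin n) ℂ) (v : Fin n → ℂ)
    (s : ℝ) (x : Fin n → ℂ) :
    hermForm (hermBlock A v s) (Sum.elim x 1) = hermForm A x + 2 * (star v ⬝ᵥ x).re + s := by
  have hstar : star (Sum.elim x 1 : Fin n ⊕ Unit → ℂ) = Sum.elim (star x) 1 := by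
    ext (i | ⟨⟩) <;> simp
  rw [hermForm, hstar, hermBlock, fromBlocks_mulVec, sumElim_dotProduct_sumElim]
  simp [dotProduct, mulVec, hermForm, mul_add, Finset.sum_add_distrib, mul_comm (x _).re (v _).re,
    mul_comm (x _).im (v _).im]
  ring

theorem hermitian_s_lemma_general {n : ℕ}
    (A B : Matrix (Fin n) (Fin n) ℂ) (hA : A.IsHermitian) (hB : B.IsHermitian)
    (b d : Fin n → ℂ) (c f : ℝ)
    (g φ : (Fin n → ℂ) → ℝ)
    (hg : ∀ x, g x = (star x ⬝ᵥ A.mulVec x).re + 2 * (star b ⬝ᵥ x).re + c)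
    (hφ : ∀ x, φ x = (star x ⬝ᵥ B.mulVec x).re + 2 * (star d ⬝ᵥ x).re + f)
    (hSlater : ∃ x₀ : Fin n → ℂ, 0 < g x₀) :
    (∀ x : Fin n → ℂ, 0 ≤ g x → 0 ≤ φ x) ↔
      ∃ lam : ℝ, 0 ≤ lam ∧
        (hermBlock (B - lam • A) (d - lam • b) (f - lam * c)).PosSemidef := by
  obtain ⟨x₀, hx₀⟩ := hSlater
  have hM := hermBlock_isHermitian hA b c
  have hN := hermBlock_isHermitian hB d f
  have hg' : ∀ x, hermForm (hermBlock A b c) (Sum.elim x 1) = g x := fun x => by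
    rw [hermForm_hermBlock_sumElim_one, hg, hermForm]
  have hφ' : ∀ x, hermForm (hermBlock B d f) (Sum.elim x 1) = φ x := fun x => by
    rw [hermForm_hermBlock_sumElim_one, hφ, hermForm]
  simp only [hermBlock_sub_smul, posSemidef_iff_hermForm_nonneg, hermForm_sub, hermForm_real_smul,
    sub_nonneg]
  constructor
  · intro himp
    have hhom := hermForm_nonneg_imp_of_forall_sumElim_one hM hN (x₀ := x₀) (by rwa [hg'])
      fun x => by simpa only [hg', hφ'] using himp x
    obtain ⟨lam, hlam, hle⟩ := exists_smul_hermForm_le hM hN (y₀ := Sum.elim x₀ 1) (by rwa [hg'])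
      hhom
    exact ⟨lam, hlam, hN.sub (hM.smul rfl), hle⟩
  · rintro ⟨lam, hlam, -, hle⟩ x hgx
    have := hle (Sum.elim x 1)
    rw [hg', hφ'] at this
    exact (mul_nonneg hlam hgx).trans this

/-- Hermitian S-lemma (S-procedure with one constraint, complex case).
With `g x = xᴴAx + 2 Re(bᴴx) + c` and `φ x = xᴴBx + 2 Re(dᴴx) + f`, under the Slater
condition `∃ x₀, g x₀ > 0`, one has `(∀ x, g x ≥ 0 → φ x ≥ 0)` iff there is `λ ≥ 0` with
`[[B − λA, d − λb], [(d − λb)ᴴ, f − λc]] ⪰ 0`. -/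
theorem hermitian_s_lemma {n : ℕ} (hn : 1 ≤ n)
    (A B : Matrix (Fin n) (Fin n) ℂ) (hA : A.IsHermitian) (hB : B.IsHermitian)
    (b d : Fin n → ℂ) (c f : ℝ)
    (g φ : (Fin n → ℂ) → ℝ)
    (hg : ∀ x, g x = (star x ⬝ᵥ A.mulVec x).re + 2 * (star b ⬝ᵥ x).re + c)
    (hφ : ∀ x, φ x = (star x ⬝ᵥ B.mulVec x).re + 2 * (star d ⬝ᵥ x).re + f)
    (hSlater : ∃ x₀ : Fin n → ℂ, 0 < g x₀) :
    (∀ x : Fin n → ℂ, 0 ≤ g x → 0 ≤ φ x) ↔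
      ∃ lam : ℝ, 0 ≤ lam ∧
        (hermBlock (B - lam • A) (d - lam • b) (f - lam * c)).PosSemidef :=
  hermitian_s_lemma_general A B hA hB b d c f g φ hg hφ hSlater
end

section
/- Key step in the proof of Lemma 2 (rank-one optimality of the SDR solution via KKT complementary slackness). Let n ≥ 1, let c ∈ ℝ, let h ∈ ℂⁿ, and set Z = Iₙ − c·(h hᴴ). Let W be an n×n complex Hermitian positive semidefinite matrix with W ≠ 0. If Z·W = 0 (complementary slackness), then rank(W) = 1; moreover h ≠ 0, c·‖h‖² = 1, and there exists a real number β > 0 such that W = β·(h hᴴ). -/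
/-!
Complementary slackness `(1 - c h hᴴ) W = 0` says `W = h v` for the row vector `v = c hᴴ W`, so
`W` has rank at most one. Hermitian symmetry of `h v` forces `v = α hᴴ`, and `hᴴ W h = α ‖h‖⁴ ≥ 0`
makes `α` a nonnegative real, nonzero since `W ≠ 0`. Finally `Z W = 0` with `W = β h hᴴ` gives
`Z h = (1 - c ‖h‖²) h = 0`.
-/

open Matrix ComplexOrder

namespace Matrix

variable {n : Type*} [Fintype n]

theorem eq_vecMulVec_of_one_sub_vecMulVec_mul_eq_zero {R : Type*} [Ring R] [DecidableEq n]
    {u v : n → R} {W : Matrix n n R} (hW : (1 - vecMulVec u v) * W = 0) :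
    W = vecMulVec u (v ᵥ* W) := by
  rwa [sub_mul, one_mul, vecMulVec_mul, sub_eq_zero] at hW

theorem rank_pos_of_ne_zero {m K : Type*} [Field K] {A : Matrix m n K} (hA : A ≠ 0) :
    0 < A.rank := by
  classical
  rwa [rank, Module.finrank_pos_iff, Submodule.nontrivial_iff_ne_bot, Ne, LinearMap.range_eq_bot,
    ← toLin'_apply', LinearEquiv.map_eq_zero_iff]

theorem rank_vecMulVec_of_ne_zero {K : Type*} [Field K] {u v : n → K}
    (huv : vecMulVec u v ≠ 0) : (vecMulVec u v).rank = 1 :=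
  le_antisymm (rank_vecMulVec_le u v) (rank_pos_of_ne_zero huv)

theorem IsHermitian.exists_vecMulVec_eq_smul_vecMulVec_star {K : Type*} [Field K] [StarRing K]
    {u v : n → K} (hA : (vecMulVec u v).IsHermitian) :
    ∃ α : K, vecMulVec u v = α • vecMulVec u (star u) := by
  by_cases hu : u = 0
  · exact ⟨0, by simp [hu]⟩
  obtain ⟨i, hi⟩ := Function.ne_iff.mp hu
  refine ⟨star (v i) / u i, ?_⟩
  rw [← vecMulVec_smul]
  congr 1
  ext j
  have hij := congrFun (congrFun hA i) j
  simp only [conjTranspose_vecMulVec, vecMulVec_apply, Pi.star_apply] at hij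
  simp only [Pi.smul_apply, Pi.star_apply, smul_eq_mul]
  rw [div_mul_eq_mul_div, hij, mul_div_cancel_left₀ _ hi]

theorem PosSemidef.exists_vecMulVec_eq_real_smul_vecMulVec_star {𝕜 : Type*} [RCLike 𝕜]
    {u v : n → 𝕜} (hA : (vecMulVec u v).PosSemidef) :
    ∃ β : ℝ, 0 ≤ β ∧ vecMulVec u v = β • vecMulVec u (star u) := by
  obtain ⟨α, hα⟩ := hA.isHermitian.exists_vecMulVec_eq_smul_vecMulVec_star
  by_cases hu : u = 0
  · exact ⟨0, le_rfl, by simp [hu]⟩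
  have hs : 0 < star u ⬝ᵥ u := dotProduct_star_self_pos_iff.mpr hu
  have hquad : star u ⬝ᵥ (vecMulVec u v *ᵥ u) = (star u ⬝ᵥ u * star u ⬝ᵥ u) * α := by
    rw [hα, smul_mulVec, vecMulVec_mulVec]
    simp only [op_smul_eq_smul, dotProduct_smul, smul_eq_mul, mul_comm]
  have hα0 : 0 ≤ α := by
    have := hA.dotProduct_mulVec_nonneg u
    rw [hquad] at this
    have hss := mul_pos hs hs
    have := mul_nonneg (RCLike.inv_pos_of_pos hss).le this
    rwa [inv_mul_cancel_left₀ hss.ne'] at this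
  obtain ⟨β, hβ, rfl⟩ := RCLike.nonneg_iff_exists_ofReal.mp hα0
  exact ⟨β, hβ, by rw [hα, RCLike.real_smul_eq_coe_smul (K := 𝕜)]⟩

theorem one_sub_vecMulVec_mulVec {R : Type*} [CommRing R] [DecidableEq n] (u v : n → R) :
    (1 - vecMulVec u v) *ᵥ u = (1 - v ⬝ᵥ u) • u := by
  rw [sub_mulVec, one_mulVec, vecMulVec_mulVec, op_smul_eq_smul, sub_smul, one_smul]

theorem star_dotProduct_self_eq_sum_norm_sq {𝕜 : Type*} [RCLike 𝕜] (u : n → 𝕜) :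
    star u ⬝ᵥ u = ((∑ i, ‖u i‖ ^ 2 : ℝ) : 𝕜) := by
  simp [dotProduct, RCLike.conj_mul]

end Matrix

theorem sdr_rank_one_optimality_general {n : ℕ} (c : ℝ) (h : Fin n → ℂ)
    (Z W : Matrix (Fin n) (Fin n) ℂ)
    (hZ : Z = 1 - c • Matrix.vecMulVec h (star h))
    (hW : W.PosSemidef) (hW0 : W ≠ 0) (hZW : Z * W = 0) :
    W.rank = 1 ∧ h ≠ 0 ∧ c * (∑ i, ‖h i‖ ^ 2) = 1 ∧
      ∃ β : ℝ, 0 < β ∧ W = β • Matrix.vecMulVec h (star h) := by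
  rw [← vecMulVec_smul] at hZ
  subst hZ
  have hWv := eq_vecMulVec_of_one_sub_vecMulVec_mul_eq_zero hZW
  obtain ⟨β, hβ, hWβ⟩ := (hWv ▸ hW).exists_vecMulVec_eq_real_smul_vecMulVec_star
  rw [← hWv] at hWβ
  obtain ⟨hβ0, hh0⟩ : β ≠ 0 ∧ h ≠ 0 := by simpa [hWβ] using hW0
  refine ⟨hWv ▸ rank_vecMulVec_of_ne_zero (hWv ▸ hW0), hh0, ?_, β, hβ.lt_of_ne' hβ0, hWβ⟩
  have hZh : (1 - vecMulVec h (c • star h)) *ᵥ h = 0 := by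
    simpa [hWβ, ← vecMulVec_smul, mul_vecMulVec, hβ0, hh0] using hZW
  rw [one_sub_vecMulVec_mulVec, smul_eq_zero_iff_left hh0, sub_eq_zero, smul_dotProduct,
    star_dotProduct_self_eq_sum_norm_sq, RCLike.real_smul_eq_coe_mul, ← RCLike.ofReal_mul,
    eq_comm, ← RCLike.ofReal_one, RCLike.ofReal_inj] at hZh
  exact hZh

/-- Key step in the proof of Lemma 2 (rank-one optimality of the SDR solution via KKT
complementary slackness): if `Z = Iₙ − c·(h hᴴ)`, `W ⪰ 0`, `W ≠ 0`, and `Z·W = 0`, then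
`rank W = 1`; moreover `h ≠ 0`, `c·‖h‖² = 1`, and `W = β·(h hᴴ)` for some real `β > 0`. -/
theorem sdr_rank_one_optimality {n : ℕ} (hn : 1 ≤ n) (c : ℝ) (h : Fin n → ℂ)
    (Z W : Matrix (Fin n) (Fin n) ℂ)
    (hZ : Z = 1 - c • Matrix.vecMulVec h (star h))
    (hW : W.PosSemidef) (hW0 : W ≠ 0) (hZW : Z * W = 0) :
    W.rank = 1 ∧ h ≠ 0 ∧ c * (∑ i, ‖h i‖ ^ 2) = 1 ∧
      ∃ β : ℝ, 0 < β ∧ W = β • Matrix.vecMulVec h (star h) :=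
  sdr_rank_one_optimality_general c h Z W hZ hW hW0 hZW
end
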